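/- Fix n ∈ ℕ and p ∈ 𝒫. If x ∈ ρ^k(n, p) and y ∈ ρ^m(n, p) are distinct punctures such that the tiles t(x) and t(y) of ω^n(p) are adjacent (the interior of t(x) ∪ t(y) is connected), then |k − m| ≤ 1. -/

import Mathlib

/-!
Suppose `m ≥ k + 2` and let `F` be the support of what remains of `ω^n(p)` after the layers
`ρ^0, …, ρ^k` are removed. The tile `t(y)` remains and does not meet the frontier of `F` (else
`y ∈ ρ^{k+1}`), so `t(y) ⊆ interior F`. The tile `t(x)` was removed, so its interior is disjoint
from the interiors of the finitely many closed tiles making up `F`, hence from `interior F`.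
Then the open sets `interior F` and `t(y)ᶜ` separate `interior (t(x) ∪ t(y))`.
-/

open Metric Set Pointwise

noncomputable section

/-- Points of `ℝ^d`. -/
abbrev Pt (d : ℕ) := EuclideanSpace ℝ (Fin d)

/-- A (possibly labelled) tile in `ℝ^d`: a subset of `ℝ^d` together with a label. -/
structure Tile (d : ℕ) where
  carrier : Set (Pt d)
  label : ℕ

instance {d : ℕ} : Inhabited (Tile d) := ⟨⟨∅, 0⟩⟩

/-- Translate of a tile by a vector. -/
def Tile.translate {d : ℕ} (t : Tile d) (x : Pt d) : Tile d :=
  ⟨(fun y => y + x) '' t.carrier, t.label⟩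

/-- A tile proper: homeomorphic to the closed unit ball. -/
def Tile.IsTile {d : ℕ} (t : Tile d) : Prop :=
  Nonempty (t.carrier ≃ₜ (Metric.closedBall (0 : Pt d) 1))

/-- Support of a partial tiling: the union of its tiles. -/
def psupp {d : ℕ} (P : Set (Tile d)) : Set (Pt d) := ⋃ t ∈ P, t.carrier

/-- `tilesAt P U` = the tiles of `P` meeting `U`, written `P(U)` in the paper. -/
def tilesAt {d : ℕ} (P : Set (Tile d)) (U : Set (Pt d)) : Set (Tile d) :=
  {t ∈ P | (t.carrier ∩ U).Nonempty}

/-- Translate of a collection of tiles. -/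
def translateSet {d : ℕ} (P : Set (Tile d)) (x : Pt d) : Set (Tile d) :=
  (fun t => t.translate x) '' P

/-- A partial tiling: tiles with pairwise disjoint interiors. -/
def IsPartialTiling {d : ℕ} (P : Set (Tile d)) : Prop :=
  (∀ t ∈ P, t.IsTile) ∧
  ∀ t ∈ P, ∀ t' ∈ P, t ≠ t' → interior t.carrier ∩ interior t'.carrier = ∅

/-- A patch: a finite partial tiling. -/
def IsPatch {d : ℕ} (P : Set (Tile d)) : Prop := IsPartialTiling P ∧ P.Finite

/-- A tiling of all of `ℝ^d`. -/
def IsTilingOfSpace {d : ℕ} (P : Set (Tile d)) : Prop :=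
  IsPartialTiling P ∧ psupp P = univ

/-- A substitution tiling system `(𝒫, ω)` with inflation constant `λ > 1`. -/
structure SubstSystem (d : ℕ) where
  proto : Set (Tile d)
  proto_finite : proto.Finite
  proto_nonempty : proto.Nonempty
  proto_isTile : ∀ p ∈ proto, p.IsTile
  proto_zero_mem : ∀ p ∈ proto, (0 : Pt d) ∈ interior p.carrier
  proto_no_translate : ∀ p ∈ proto, ∀ q ∈ proto, ∀ x : Pt d,
    q = p.translate x → p = q ∧ x = 0
  lam : ℝ
  one_lt_lam : 1 < lam
  sub : Tile d → Set (Tile d)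
  sub_patch : ∀ p ∈ proto, IsPatch (sub p)
  sub_proto : ∀ p ∈ proto, ∀ t ∈ sub p, ∃ q ∈ proto, ∃ x : Pt d, t = q.translate x
  sub_supp : ∀ p ∈ proto, psupp (sub p) = lam • p.carrier
  sub_translate : ∀ (t : Tile d) (x : Pt d),
    sub (t.translate x) = (fun s => s.translate (lam • x)) '' sub t

namespace SubstSystem

variable {d : ℕ} (S : SubstSystem d)

/-- Tile-wise application of the substitution to a collection of tiles. -/
def subSet (P : Set (Tile d)) : Set (Tile d) := ⋃ t ∈ P, S.sub t

/-- Iterated substitution `ω^n` on collections of tiles. -/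
def subIter (n : ℕ) (P : Set (Tile d)) : Set (Tile d) := (S.subSet)^[n] P

/-- `ω^n(t)` for a single tile `t`. -/
def omegan (n : ℕ) (t : Tile d) : Set (Tile d) := S.subIter n {t}

/-- The continuous hull `Ω`. -/
def Omega : Set (Set (Tile d)) :=
  {T | IsTilingOfSpace T ∧ ∀ P : Set (Tile d), P ⊆ T → IsPatch P →
    ∃ n : ℕ, ∃ p ∈ S.proto, ∃ x : Pt d, P ⊆ translateSet (S.omegan n p) x}

/-- `x` is the puncture of the tile `t`, i.e. `t = p + x` for a prototile `p`. -/
def IsPuncture (t : Tile d) (x : Pt d) : Prop :=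
  ∃ p ∈ S.proto, t = p.translate x

open Classical in
/-- The puncture `x(t)` of a tile `t` (chosen; unique for translates of prototiles). -/
def punc (t : Tile d) : Pt d :=
  if h : ∃ x : Pt d, S.IsPuncture t x then h.choose else 0

/-- The punctured hull (transversal) `Ω_punc`. -/
def OmegaPunc : Set (Set (Tile d)) :=
  {T ∈ S.Omega | ∃ t ∈ T, S.IsPuncture t 0}

end SubstSystem

/-- The tiling metric. -/
def tilingDist {d : ℕ} (T T' : Set (Tile d)) : ℝ :=
  sInf ({1} ∪ {ε : ℝ | 0 < ε ∧ ∃ x x' : Pt d, ‖x‖ < ε ∧ ‖x'‖ < ε ∧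
    tilesAt (translateSet T (-x)) (ball (0 : Pt d) (1 / ε)) =
      tilesAt (translateSet T' (-x')) (ball (0 : Pt d) (1 / ε))})

namespace SubstSystem

variable {d : ℕ} (S : SubstSystem d)

/-- Density of a family of tilings in `Ω_punc` w.r.t. the tiling metric. -/
def DenseInPunc (E : Set (Set (Tile d))) : Prop :=
  ∀ T ∈ S.OmegaPunc, ∀ ε : ℝ, 0 < ε → ∃ T' ∈ E, tilingDist T T' < ε

/-- Openness of a subset of `Ω_punc` w.r.t. the tiling metric (subspace topology). -/
def OpenInPunc (E : Set (Set (Tile d))) : Prop :=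
  E ⊆ S.OmegaPunc ∧ ∀ T ∈ E, ∃ ε : ℝ, 0 < ε ∧
    ∀ T' ∈ S.OmegaPunc, tilingDist T T' < ε → T' ∈ E

/-- The translational equivalence relation `R_punc` on `Ω_punc`. -/
def Rpunc : Set (Set (Tile d) × Set (Tile d)) :=
  {TT | TT.1 ∈ S.OmegaPunc ∧ TT.2 ∈ S.OmegaPunc ∧ ∃ x : Pt d, TT.2 = translateSet TT.1 x}

/-- `Punc(n, p)`: the punctures of the tiles of `ω^n(p)`. -/
def Punc (n : ℕ) (p : Tile d) : Set (Pt d) :=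
  {x | ∃ t ∈ S.omegan n p, S.IsPuncture t x}

/-- `E^n_p(x, y)`. -/
def Eset (n : ℕ) (p : Tile d) (x y : Pt d) : Set (Set (Tile d) × Set (Tile d)) :=
  {TT | ∃ T ∈ S.OmegaPunc, p ∈ T ∧
    TT.1 = translateSet (S.subIter n T) (-x) ∧ TT.2 = translateSet (S.subIter n T) (-y)}

/-- `R_n`. -/
def Rn (n : ℕ) : Set (Set (Tile d) × Set (Tile d)) :=
  ⋃ p ∈ S.proto, ⋃ x ∈ S.Punc n p, ⋃ y ∈ S.Punc n p, S.Eset n p x y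

/-- `R_AF = ∪ₙ R_n`. -/
def RAF : Set (Set (Tile d) × Set (Tile d)) := ⋃ n : ℕ, S.Rn n

/-- `U(P, t)`. -/
def Uset (P : Set (Tile d)) (t : Tile d) : Set (Set (Tile d)) :=
  {T ∈ S.OmegaPunc | translateSet P (-(S.punc t)) ⊆ T}

/-- `V(P, t₁, t₂)`. -/
def Vset (P : Set (Tile d)) (t₁ t₂ : Tile d) : Set (Set (Tile d) × Set (Tile d)) :=
  {TT | TT.1 ∈ S.Uset P t₁ ∧ TT.2 = translateSet TT.1 (S.punc t₁ - S.punc t₂)}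

/-- (A1) primitivity. -/
def Primitive : Prop :=
  ∃ N : ℕ, ∀ p ∈ S.proto, ∀ q ∈ S.proto, ∃ x : Pt d, Tile.translate q x ∈ S.omegan N p

/-- (A2) finite local complexity. -/
def FLC : Prop :=
  ∀ R : ℝ, 0 < R → ∃ Ps : Set (Set (Tile d)), Ps.Finite ∧
    ∀ P : Set (Tile d), IsPatch P → Metric.diam (psupp P) < R →
      (∃ T ∈ S.Omega, P ⊆ T) → ∃ P₀ ∈ Ps, ∃ x : Pt d, P = translateSet P₀ x

/-- (A3) `ω : Ω → Ω` is bijective. -/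
def SubBijective : Prop := Set.BijOn S.subSet S.Omega S.Omega

/-- (A4) `ω` forces its border. -/
def ForcesBorder : Prop :=
  ∃ n : ℕ, ∀ p ∈ S.proto, ∀ T ∈ S.Omega, ∀ T' ∈ S.Omega, ∀ x x' : Pt d,
    translateSet (S.omegan n p) x ⊆ T → translateSet (S.omegan n p) x' ⊆ T' →
    translateSet (tilesAt T ((fun y => y + x) '' psupp (S.omegan n p))) (-x) =
      translateSet (tilesAt T' ((fun y => y + x') '' psupp (S.omegan n p))) (-x')

/-- Prototile boundaries have box-counting dimension strictly less than `d`. -/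
def SmallBoundary : Prop :=
  ∃ c : ℝ, c < d ∧ ∃ K₀ : ℝ, ∀ p ∈ S.proto, ∀ ε : ℝ, 0 < ε →
    ∃ centers : Finset (Pt d), (centers.card : ℝ) ≤ K₀ * ε ^ (-c) ∧
      frontier p.carrier ⊆ ⋃ z ∈ centers, ball z ε

end SubstSystem

/-- A symmetry group action for `(𝒫, ω)`: `G ≤ O(d, ℝ)` acting on tiles, preserving
the prototile set and commuting with the substitution. -/
structure SymmAction {d : ℕ} (S : SubstSystem d) (G : Subgroup (Pt d ≃ₗᵢ[ℝ] Pt d)) where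
  act : G → Tile d → Tile d
  act_carrier : ∀ (g : G) (t : Tile d),
    (act g t).carrier = (g : Pt d ≃ₗᵢ[ℝ] Pt d) '' t.carrier
  act_one : ∀ t : Tile d, act 1 t = t
  act_mul : ∀ (g h : G) (t : Tile d), act (g * h) t = act g (act h t)
  act_proto : ∀ (g : G), ∀ p ∈ S.proto, act g p ∈ S.proto
  act_translate : ∀ (g : G) (t : Tile d) (x : Pt d),
    act g (t.translate x) = (act g t).translate ((g : Pt d ≃ₗᵢ[ℝ] Pt d) x)
  act_sub : ∀ (g : G), ∀ p ∈ S.proto, S.sub (act g p) = act g '' S.sub p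

/-- Action of a group element on a (partial) tiling: `gT = {gt : t ∈ T}`. -/
def SymmAction.actSet {d : ℕ} {S : SubstSystem d} {G : Subgroup (Pt d ≃ₗᵢ[ℝ] Pt d)}
    (σ : SymmAction S G) (g : G) (T : Set (Tile d)) : Set (Tile d) := σ.act g '' T

/-- `G` acts freely on the prototile set. -/
def SymmAction.FreeOnProto {d : ℕ} {S : SubstSystem d} {G : Subgroup (Pt d ≃ₗᵢ[ℝ] Pt d)}
    (σ : SymmAction S G) : Prop := ∀ g : G, ∀ p ∈ S.proto, σ.act g p = p → g = 1

/-- Composition of relations. -/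
def relComp {α : Type*} (R₁ R₂ : Set (α × α)) : Set (α × α) :=
  {q | ∃ z : α, (q.1, z) ∈ R₁ ∧ (z, q.2) ∈ R₂}

/-- Transpose (inverse) of a relation. -/
def relTrans {α : Type*} (R : Set (α × α)) : Set (α × α) := {q | (q.2, q.1) ∈ R}

end

open Classical in
/-- `t(x)`: the tile of `ω^n(p)` with puncture `x` (chosen). -/
noncomputable def tileOf {d : ℕ} (S : SubstSystem d) (n : ℕ) (p : Tile d) (x : Pt d) : Tile d :=
  if h : ∃ t ∈ S.omegan n p, S.IsPuncture t x then h.choose else default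

/-- `rhoCum S n p k = ρ^0(n,p) ∪ ⋯ ∪ ρ^{k−1}(n,p)`: the punctures removed after
peeling off `k` boundary layers from `ω^n(p)`. -/
noncomputable def rhoCum {d : ℕ} (S : SubstSystem d) (n : ℕ) (p : Tile d) : ℕ → Set (Pt d)
  | 0 => ∅
  | k + 1 => rhoCum S n p k ∪
      {x ∈ S.Punc n p | x ∉ rhoCum S n p k ∧
        ((tileOf S n p x).carrier ∩
          frontier (psupp {t ∈ S.omegan n p |
            ∀ x' : Pt d, S.IsPuncture t x' → x' ∉ rhoCum S n p k})).Nonempty}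

/-- The `k`-th boundary layer `ρ^k(n, p)` of punctures of `ω^n(p)`. -/
def rho {d : ℕ} (S : SubstSystem d) (n : ℕ) (p : Tile d) (k : ℕ) : Set (Pt d) :=
  rhoCum S n p (k + 1) \ rhoCum S n p k

section Topology

variable {X : Type*} [TopologicalSpace X]

lemma disjoint_interior_union_of_isClosed {U C D : Set X} (hU : IsOpen U) (hC : IsClosed C)
    (hUC : Disjoint U (interior C)) (hUD : Disjoint U (interior D)) :
    Disjoint U (interior (C ∪ D)) := by
  set W := U ∩ interior (C ∪ D)
  have hW : IsOpen W := hU.inter isOpen_interior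
  have hWD : W \ C ⊆ interior D := (hW.sdiff hC).subset_interior_iff.2 fun z hz =>
    (interior_subset hz.1.2 : z ∈ C ∪ D).resolve_left hz.2
  have hWC : W ⊆ interior C := hW.subset_interior_iff.2 fun z hz =>
    by_contra fun hzC => disjoint_left.1 hUD hz.1 (hWD ⟨hz, hzC⟩)
  exact disjoint_left.2 fun z hzU hzI => disjoint_left.1 hUC hzU (hWC ⟨hzU, hzI⟩)

lemma Set.Finite.disjoint_interior_biUnion {ι : Type*} {s : Set ι} (hs : s.Finite)
    {C : ι → Set X} (hC : ∀ i ∈ s, IsClosed (C i)) {U : Set X} (hU : IsOpen U)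
    (hUC : ∀ i ∈ s, Disjoint U (interior (C i))) :
    Disjoint U (interior (⋃ i ∈ s, C i)) := by
  induction s, hs using Set.Finite.induction_on with
  | empty => simp
  | @insert a s _ _ ih =>
    rw [biUnion_insert]
    exact disjoint_interior_union_of_isClosed hU (hC a (mem_insert a s))
      (hUC a (mem_insert a s))
      (ih (fun i hi => hC i (mem_insert_of_mem a hi)) fun i hi => hUC i (mem_insert_of_mem a hi))

lemma not_isPreconnected_interior_union {A B G : Set X} (hB : IsClosed B) (hG : IsOpen G)
    (hBG : B ⊆ G) (hAG : Disjoint (interior A) G) (hA : (interior A).Nonempty)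
    (hB' : (interior B).Nonempty) : ¬IsPreconnected (interior (A ∪ B)) := by
  intro hconn
  have hsep : Disjoint (G \ B) (interior (B ∪ A)) :=
    disjoint_interior_union_of_isClosed (hG.sdiff hB) hB
      (disjoint_left.2 fun _ hz hzB => hz.2 (interior_subset hzB))
      (disjoint_left.2 fun _ hz hzA => disjoint_left.1 hAG hzA hz.1)
  obtain ⟨a, ha⟩ := hA
  obtain ⟨b, hb⟩ := hB'
  obtain ⟨z, hzI, hzG, hzB⟩ := hconn G Bᶜ hG hB.isOpen_compl
    (fun z _ => (em (z ∈ B)).imp (@hBG z) id)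
    ⟨b, interior_mono subset_union_right hb, hBG (interior_subset hb)⟩
    ⟨a, interior_mono subset_union_left ha, fun haB => disjoint_left.1 hAG ha (hBG haB)⟩
  exact disjoint_left.1 hsep ⟨hzG, hzB⟩ (by rwa [union_comm])

end Topology

section Tiles

variable {d : ℕ}

namespace Tile

lemma translate_translate (t : Tile d) (a b : Pt d) :
    (t.translate a).translate b = t.translate (a + b) := by
  simp only [translate, image_image, add_assoc]

lemma translate_zero (t : Tile d) : t.translate 0 = t := by
  simp [translate]

lemma interior_carrier_translate (t : Tile d) (v : Pt d) :
    interior (t.translate v).carrier = (fun y => y + v) '' interior t.carrier :=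
  ((Homeomorph.addRight v).image_interior t.carrier).symm

lemma IsTile.translate {t : Tile d} (h : t.IsTile) (v : Pt d) : (t.translate v).IsTile :=
  let ⟨e⟩ := h
  ⟨((Homeomorph.addRight v).image t.carrier).symm.trans e⟩

lemma IsTile.isClosed {t : Tile d} (h : t.IsTile) : IsClosed t.carrier := by
  obtain ⟨e⟩ := h
  have : CompactSpace (closedBall (0 : Pt d) 1) :=
    isCompact_iff_compactSpace.1 (isCompact_closedBall _ _)
  have : CompactSpace t.carrier := e.symm.compactSpace
  exact (isCompact_iff_compactSpace.2 this).isClosed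

end Tile

lemma psupp_translateSet (P : Set (Tile d)) (v : Pt d) :
    psupp (translateSet P v) = (fun y => y + v) '' psupp P := by
  simp only [psupp, translateSet, biUnion_image, image_iUnion₂]
  rfl

lemma IsPatch.translateSet {P : Set (Tile d)} (hP : IsPatch P) (v : Pt d) :
    IsPatch (translateSet P v) := by
  refine ⟨⟨?_, ?_⟩, hP.2.image _⟩
  · rintro _ ⟨t, ht, rfl⟩
    exact (hP.1.1 t ht).translate v
  · rintro _ ⟨t, ht, rfl⟩ _ ⟨t', ht', rfl⟩ hne
    rw [Tile.interior_carrier_translate, Tile.interior_carrier_translate,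
      ← image_inter (add_left_injective v), hP.1.2 t ht t' ht' (fun h => hne (h ▸ rfl)),
      image_empty]

end Tiles

namespace SubstSystem

variable {d : ℕ} {S : SubstSystem d}

lemma IsPuncture.eq {t : Tile d} {a b : Pt d} (ha : S.IsPuncture t a) (hb : S.IsPuncture t b) :
    a = b := by
  obtain ⟨p₁, hp₁, rfl⟩ := ha
  obtain ⟨p₂, hp₂, h⟩ := hb
  have hp : p₂ = p₁.translate (a - b) := by
    rw [sub_eq_add_neg, ← Tile.translate_translate, h, Tile.translate_translate, add_neg_cancel,
      Tile.translate_zero]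
  exact sub_eq_zero.1 (S.proto_no_translate p₁ hp₁ p₂ hp₂ _ hp).2

lemma IsPuncture.mem_interior {t : Tile d} {a : Pt d} (h : S.IsPuncture t a) :
    a ∈ interior t.carrier := by
  obtain ⟨q, hq, rfl⟩ := h
  rw [Tile.interior_carrier_translate]
  exact ⟨0, S.proto_zero_mem q hq, zero_add a⟩

lemma IsPuncture.isTile {t : Tile d} {a : Pt d} (h : S.IsPuncture t a) : t.IsTile := by
  obtain ⟨q, hq, rfl⟩ := h
  exact (S.proto_isTile q hq).translate a

variable (S)

lemma lam_ne_zero : S.lam ≠ 0 := (zero_lt_one.trans S.one_lt_lam).ne'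

lemma sub_translate' (t : Tile d) (x : Pt d) :
    S.sub (t.translate x) = translateSet (S.sub t) (S.lam • x) :=
  S.sub_translate t x

variable {S}

lemma IsPuncture.psupp_sub {t : Tile d} {a : Pt d} (h : S.IsPuncture t a) :
    psupp (S.sub t) = S.lam • t.carrier := by
  obtain ⟨q, hq, rfl⟩ := h
  rw [S.sub_translate', psupp_translateSet, S.sub_supp q hq]
  simp only [Tile.translate, ← image_smul, image_image, smul_add]

lemma IsPuncture.isPatch_sub {t : Tile d} {a : Pt d} (h : S.IsPuncture t a) :
    IsPatch (S.sub t) := by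
  obtain ⟨q, hq, rfl⟩ := h
  rw [S.sub_translate']
  exact (S.sub_patch q hq).translateSet _

lemma IsPuncture.exists_isPuncture_of_mem_sub {t s : Tile d} {a : Pt d} (h : S.IsPuncture t a)
    (hs : s ∈ S.sub t) : ∃ b, S.IsPuncture s b := by
  obtain ⟨q, hq, rfl⟩ := h
  rw [S.sub_translate'] at hs
  obtain ⟨s₀, hs₀, rfl⟩ := hs
  obtain ⟨r, hr, w, rfl⟩ := S.sub_proto q hq s₀ hs₀
  exact ⟨w + S.lam • a, r, hr, Tile.translate_translate r w _⟩

lemma IsPuncture.interior_subset_of_mem_sub {t s : Tile d} {a : Pt d} (h : S.IsPuncture t a)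
    (hs : s ∈ S.sub t) : interior s.carrier ⊆ S.lam • interior t.carrier :=
  calc interior s.carrier ⊆ interior (psupp (S.sub t)) := interior_mono (subset_biUnion_of_mem hs)
    _ = S.lam • interior t.carrier := by rw [h.psupp_sub, interior_smul₀ S.lam_ne_zero]

lemma isPatch_subSet {P : Set (Tile d)} (hP : IsPatch P) (hPunc : ∀ t ∈ P, ∃ a, S.IsPuncture t a) :
    IsPatch (S.subSet P) := by
  have mem : ∀ {s}, s ∈ S.subSet P ↔ ∃ t ∈ P, s ∈ S.sub t := by simp [subSet]
  refine ⟨⟨fun s hs => ?_, fun s hs s' hs' hne => ?_⟩,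
    hP.2.biUnion fun t ht => (hPunc t ht).choose_spec.isPatch_sub.2⟩
  · obtain ⟨t, ht, hst⟩ := mem.1 hs
    exact (hPunc t ht).choose_spec.isPatch_sub.1.1 s hst
  · obtain ⟨t, ht, hst⟩ := mem.1 hs
    obtain ⟨t', ht', hst'⟩ := mem.1 hs'
    obtain ⟨a, ha⟩ := hPunc t ht
    obtain ⟨a', ha'⟩ := hPunc t' ht'
    rcases eq_or_ne t t' with rfl | htt'
    · exact ha.isPatch_sub.1.2 s hst s' hst' hne
    · refine subset_empty_iff.1 ((inter_subset_inter (ha.interior_subset_of_mem_sub hst)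
        (ha'.interior_subset_of_mem_sub hst')).trans ?_)
      rw [← smul_set_inter₀ S.lam_ne_zero, hP.1.2 t ht t' ht' htt', smul_set_empty]

lemma exists_isPuncture_of_mem_subSet {P : Set (Tile d)}
    (hPunc : ∀ t ∈ P, ∃ a, S.IsPuncture t a) : ∀ s ∈ S.subSet P, ∃ b, S.IsPuncture s b := by
  intro s hs
  obtain ⟨t, ht, hst⟩ := mem_iUnion₂.1 hs
  exact (hPunc t ht).choose_spec.exists_isPuncture_of_mem_sub hst

variable (S)

lemma omegan_succ (n : ℕ) (t : Tile d) : S.omegan (n + 1) t = S.subSet (S.omegan n t) :=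
  Function.iterate_succ_apply' _ _ _

variable {S}

lemma exists_isPuncture_of_mem_omegan {p : Tile d} (hp : p ∈ S.proto) :
    ∀ n, ∀ t ∈ S.omegan n p, ∃ a, S.IsPuncture t a
  | 0, t, ht => by
    obtain rfl : t = p := ht
    exact ⟨0, t, hp, (Tile.translate_zero t).symm⟩
  | n + 1, t, ht => by
    rw [omegan_succ] at ht
    exact exists_isPuncture_of_mem_subSet (exists_isPuncture_of_mem_omegan hp n) t ht

lemma isPatch_omegan {p : Tile d} (hp : p ∈ S.proto) : ∀ n, IsPatch (S.omegan n p)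
  | 0 => ⟨⟨fun t ht => ht ▸ S.proto_isTile p hp,
      fun t ht t' ht' hne => (hne (ht.trans ht'.symm)).elim⟩, finite_singleton p⟩
  | n + 1 => by
    rw [omegan_succ]
    exact isPatch_subSet (isPatch_omegan hp n) (exists_isPuncture_of_mem_omegan hp n)

end SubstSystem

section Layers

variable {d : ℕ} (S : SubstSystem d) (n : ℕ) (p : Tile d)

/-- The tiles of `ω^n(p)` left after the layers `ρ^0(n, p), …, ρ^{j-1}(n, p)` are peeled off. -/
def remainingPatch (j : ℕ) : Set (Tile d) :=
  {t ∈ S.omegan n p | ∀ x' : Pt d, S.IsPuncture t x' → x' ∉ rhoCum S n p j}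

lemma rhoCum_subset_punc : ∀ j, rhoCum S n p j ⊆ S.Punc n p
  | 0 => empty_subset _
  | j + 1 => union_subset (rhoCum_subset_punc j) (sep_subset _ _)

lemma rhoCum_mono : Monotone (rhoCum S n p) :=
  monotone_nat_of_le_succ fun _ => subset_union_left

variable {S n p}

lemma tileOf_spec {x : Pt d} (hx : x ∈ S.Punc n p) :
    tileOf S n p x ∈ S.omegan n p ∧ S.IsPuncture (tileOf S n p x) x := by
  have hx' : ∃ t ∈ S.omegan n p, S.IsPuncture t x := hx
  rw [tileOf, dif_pos hx']
  exact hx'.choose_spec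

lemma tileOf_subset_interior_remainingPatch {j : ℕ} {x : Pt d} (hx : x ∈ S.Punc n p)
    (hxj : x ∉ rhoCum S n p (j + 1)) :
    (tileOf S n p x).carrier ⊆ interior (psupp (remainingPatch S n p j)) := by
  have hxj' : x ∉ rhoCum S n p j := fun h => hxj (rhoCum_mono S n p j.le_succ h)
  have hmem : tileOf S n p x ∈ remainingPatch S n p j :=
    ⟨(tileOf_spec hx).1, fun x' hx' => (tileOf_spec hx).2.eq hx' ▸ hxj'⟩
  have hfr : (tileOf S n p x).carrier ∩ frontier (psupp (remainingPatch S n p j)) = ∅ :=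
    not_nonempty_iff_eq_empty.1 fun h => hxj (Or.inr ⟨hx, hxj', h⟩)
  intro z hz
  by_contra hzi
  exact (eq_empty_iff_forall_notMem.1 hfr) z
    ⟨hz, subset_closure (subset_biUnion_of_mem hmem hz), hzi⟩

lemma disjoint_interior_tileOf_remainingPatch (hp : p ∈ S.proto) {j : ℕ} {x : Pt d}
    (hx : x ∈ rhoCum S n p j) :
    Disjoint (interior (tileOf S n p x).carrier) (interior (psupp (remainingPatch S n p j))) := by
  have hpatch := S.isPatch_omegan hp n
  obtain ⟨htx, hpx⟩ := tileOf_spec (rhoCum_subset_punc S n p j hx)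
  refine (hpatch.2.subset (sep_subset _ _)).disjoint_interior_biUnion
    (fun t ht => (hpatch.1.1 t ht.1).isClosed) isOpen_interior fun t ht => ?_
  have hne : tileOf S n p x ≠ t := by
    rintro rfl
    exact ht.2 x hpx hx
  exact disjoint_iff_inter_eq_empty.2 (hpatch.1.2 _ htx t ht.1 hne)

lemma le_succ_of_isConnected_interior_union (hp : p ∈ S.proto) {k m : ℕ} {x y : Pt d}
    (hx : x ∈ rho S n p k) (hy : y ∈ rho S n p m)
    (hadj : IsConnected (interior ((tileOf S n p x).carrier ∪ (tileOf S n p y).carrier))) :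
    m ≤ k + 1 := by
  by_contra! hkm
  have hyP : y ∈ S.Punc n p := rhoCum_subset_punc S n p _ hy.1
  have hy' : y ∉ rhoCum S n p (k + 1 + 1) := fun h => hy.2 (rhoCum_mono S n p hkm h)
  exact not_isPreconnected_interior_union ((tileOf_spec hyP).2.isTile.isClosed) isOpen_interior
    (tileOf_subset_interior_remainingPatch hyP hy')
    (disjoint_interior_tileOf_remainingPatch hp hx.1)
    ⟨x, (tileOf_spec (rhoCum_subset_punc S n p _ hx.1)).2.mem_interior⟩
    ⟨y, (tileOf_spec hyP).2.mem_interior⟩ hadj.isPreconnected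

end Layers

theorem stmt12_general {d : ℕ} (S : SubstSystem d)
    (n : ℕ) (p : Tile d) (hp : p ∈ S.proto)
    (k m : ℕ) (x y : Pt d) (hx : x ∈ rho S n p k) (hy : y ∈ rho S n p m)
    (hadj : IsConnected (interior ((tileOf S n p x).carrier ∪ (tileOf S n p y).carrier))) :
    k ≤ m + 1 ∧ m ≤ k + 1 :=
  ⟨le_succ_of_isConnected_interior_union hp hy hx (by rwa [union_comm]),
    le_succ_of_isConnected_interior_union hp hx hy hadj⟩

/-- If `x ∈ ρ^k(n, p)` and `y ∈ ρ^m(n, p)` are distinct punctures whose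
tiles `t(x)`, `t(y)` are adjacent, then `|k − m| ≤ 1`. -/
theorem stmt12 {d : ℕ} (hd : 1 ≤ d) (S : SubstSystem d)
    (n : ℕ) (p : Tile d) (hp : p ∈ S.proto)
    (k m : ℕ) (x y : Pt d) (hx : x ∈ rho S n p k) (hy : y ∈ rho S n p m)
    (hxy : x ≠ y)
    (hadj : IsConnected (interior ((tileOf S n p x).carrier ∪ (tileOf S n p y).carrier))) :
    k ≤ m + 1 ∧ m ≤ k + 1 :=
  stmt12_general S n p hp k m x y hx hy hadj
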